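/- arXiv:1412.1569 — 2 statements merged into one kernel-verified Lean document; each statement's English description precedes it below -/
import Mathlib

section
/- The biconic conjunction of lifts equals the lift of the intersection: for polyhedral cones C, D in ℝ^d, BL(C) ∧ BL(D) = BL(C ∩ D), and dually BL(C) ∨ BL(D) = BL(C + D). -/
open RealInnerProductSpace Pointwise

/-- The polar cone `C° = {z | ⟨x,z⟩ ≤ 0 ∀ x ∈ C}`. -/
def polarCone {E : Type*} [NormedAddCommGroup E] [InnerProductSpace ℝ E] (C : Set E) : Set E :=
  {z | ∀ x ∈ C, ⟪x, z⟫ ≤ 0}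

/-- A polyhedral cone: a finite intersection of closed linear half-spaces. -/
def IsPolyhedralCone {E : Type*} [NormedAddCommGroup E] [InnerProductSpace ℝ E]
    (C : Set E) : Prop :=
  ∃ (k : ℕ) (A : Fin k → E), C = {x | ∀ i, ⟪A i, x⟫ ≤ 0}

/-- The biconic lift `BL(C) = {(x,z) ∈ C × C° | ⟨x,z⟩ = 0}`. -/
def biconicLift {E : Type*} [NormedAddCommGroup E] [InnerProductSpace ℝ E] (C : Set E) :
    Set (E × E) :=
  {p | p.1 ∈ C ∧ p.2 ∈ polarCone C ∧ ⟪p.1, p.2⟫ = 0}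

/-- The biconic conjunction `M ∧ N := {(x, x'+y') | (x,x') ∈ M, (x,y') ∈ N}`. -/
def bconj {E : Type*} [Add E] (M N : Set (E × E)) : Set (E × E) :=
  {p | ∃ x' y', (p.1, x') ∈ M ∧ (p.1, y') ∈ N ∧ p.2 = x' + y'}

/-- The biconic disjunction `M ∨ N := {(x+y, x') | (x,x') ∈ M, (y,x') ∈ N}`. -/
def bdisj {E : Type*} [Add E] (M N : Set (E × E)) : Set (E × E) :=
  {p | ∃ x y, (x, p.2) ∈ M ∧ (y, p.2) ∈ N ∧ p.1 = x + y}

/-!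
If `x ∈ C ∩ D` and `z = x' + y'` with `x' ∈ C°`, `y' ∈ D°`, then `⟪x, x'⟫` and `⟪x, y'⟫` are both
`≤ 0`, so `⟪x, z⟫ = 0` forces both to vanish. Hence `BL(C) ∧ BL(D) = BL(C ∩ D)` as soon as
`(C ∩ D)° = C° + D°`, and, since `(C + D)° = C° ∩ D°` for cones containing `0`, the same sign
argument gives `BL(C) ∨ BL(D) = BL(C + D)`.

For polyhedral cones, `(C ∩ D)° = C° + D°` is Farkas' lemma: the polar of
`{x | ⟪a, x⟫ ≤ 0 for a ∈ s}` is the cone generated by `s`. This follows from hyperplane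
separation once finitely generated cones are known to be closed, and that is conic Carathéodory:
such a cone is a finite union of cones over linearly independent families, each the image of a
closed orthant under an injective linear map.
-/

namespace PointedCone

open Finset

variable {𝕜 E : Type*} [Field 𝕜] [LinearOrder 𝕜] [IsStrictOrderedRing 𝕜]
  [AddCommGroup E] [Module 𝕜 E]

theorem mem_hull_finset_iff {s : Finset E} {x : E} :
    x ∈ hull 𝕜 (s : Set E) ↔ ∃ c : E → 𝕜, (∀ a ∈ s, 0 ≤ c a) ∧ ∑ a ∈ s, c a • a = x := by
  refine ⟨fun hx ↦ ?_, ?_⟩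
  · obtain ⟨f, -, rfl⟩ := Submodule.mem_span_finset.1 hx
    exact ⟨fun a ↦ (f a : 𝕜), fun a _ ↦ (f a).2, rfl⟩
  · rintro ⟨c, hc, rfl⟩
    exact Submodule.sum_mem _ fun a ha ↦ (hull 𝕜 _).smul_mem (hc a ha) (subset_hull ha)

theorem exists_mem_hull_erase_of_not_linearIndepOn [DecidableEq E] {t : Finset E}
    (ht : ¬LinearIndepOn 𝕜 id (t : Set E)) {x : E} (hx : x ∈ hull 𝕜 (t : Set E)) :
    ∃ y ∈ t, x ∈ hull 𝕜 (t.erase y : Set E) := by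
  obtain ⟨f, hf, rfl⟩ := mem_hull_finset_iff.1 hx
  obtain ⟨g, hg, a, ha, hga⟩ : ∃ g : E → 𝕜, ∑ e ∈ t, g e • e = 0 ∧ ∃ a ∈ t, 0 < g a := by
    obtain ⟨g, hg, a, ha, hga⟩ := not_linearIndepOn_finset_iff.1 ht
    rcases hga.lt_or_gt with hneg | hpos
    · exact ⟨-g, by simpa [neg_smul] using hg, a, ha, neg_pos.2 hneg⟩
    · exact ⟨g, hg, a, ha, hpos⟩
  obtain ⟨i, hi, hmin⟩ := (t.filter fun e ↦ 0 < g e).exists_min_image (fun e ↦ f e / g e)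
    ⟨a, mem_filter.2 ⟨ha, hga⟩⟩
  obtain ⟨hit, hgi⟩ := mem_filter.1 hi
  -- the largest multiple of the relation `g` that can be subtracted from `f` keeping it nonnegative
  set r := f i / g i
  have hr : 0 ≤ r := div_nonneg (hf i hit) hgi.le
  refine ⟨i, hit, mem_hull_finset_iff.2 ⟨fun e ↦ f e - r * g e, fun e he ↦ ?_, ?_⟩⟩
  · rw [sub_nonneg]
    rcases lt_or_ge 0 (g e) with hge | hge
    · exact (le_div_iff₀ hge).1 (hmin e (mem_filter.2 ⟨mem_of_mem_erase he, hge⟩))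
    · exact (mul_nonpos_of_nonneg_of_nonpos hr hge).trans (hf e (mem_of_mem_erase he))
  · rw [sum_erase _ (by simp [r, hgi.ne'])]
    simp only [sub_smul, mul_smul, sum_sub_distrib, ← smul_sum, hg, smul_zero, sub_zero]

theorem exists_linearIndepOn_subset_mem_hull (s : Finset E) {x : E}
    (hx : x ∈ hull 𝕜 (s : Set E)) :
    ∃ t ⊆ s, LinearIndepOn 𝕜 id (t : Set E) ∧ x ∈ hull 𝕜 (t : Set E) := by
  classical
  induction s using Finset.strongInduction with
  | H s ih =>
    by_cases hs : LinearIndepOn 𝕜 id (s : Set E)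
    · exact ⟨s, subset_rfl, hs, hx⟩
    obtain ⟨y, hy, hxy⟩ := exists_mem_hull_erase_of_not_linearIndepOn hs hx
    obtain ⟨t, hts, ht, hxt⟩ := ih _ (erase_ssubset hy) hxy
    exact ⟨t, hts.trans (erase_subset _ _), ht, hxt⟩

section Topology

variable {E : Type*} [AddCommGroup E] [TopologicalSpace E] [IsTopologicalAddGroup E]
  [Module ℝ E] [ContinuousSMul ℝ E] [T2Space E]

theorem isClosed_hull_of_linearIndepOn {t : Finset E} (ht : LinearIndepOn ℝ id (t : Set E)) :
    IsClosed (hull ℝ (t : Set E) : Set E) := by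
  let L := Fintype.linearCombination ℝ (Subtype.val : t → E)
  have hL : Topology.IsClosedEmbedding L :=
    LinearMap.isClosedEmbedding_of_injective
      (LinearMap.ker_eq_bot.2 (LinearIndependent.fintypeLinearCombination_injective ht))
  have hhull : (hull ℝ (t : Set E) : Set E) = L '' Set.Ici 0 := by
    ext x
    simp only [SetLike.mem_coe, Submodule.mem_span_finset', Set.mem_image, Set.mem_Ici, L,
      Fintype.linearCombination_apply]
    constructor
    · rintro ⟨f, rfl⟩
      exact ⟨fun i ↦ f i, fun i ↦ (f i).2, rfl⟩
    · rintro ⟨c, hc, rfl⟩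
      exact ⟨fun i ↦ ⟨c i, hc i⟩, rfl⟩
  rw [hhull]
  exact hL.isClosedMap _ isClosed_Ici

theorem isClosed_hull_finset (s : Finset E) : IsClosed (hull ℝ (s : Set E) : Set E) := by
  classical
  have hhull : (hull ℝ (s : Set E) : Set E) =
      ⋃ (t : Finset E) (_ : t ∈ s.powerset.filter fun t : Finset E ↦
        LinearIndepOn ℝ id (t : Set E)), (hull ℝ (t : Set E) : Set E) := by
    ext x
    simp only [SetLike.mem_coe, Set.mem_iUnion, mem_filter, mem_powerset, exists_prop]
    constructor
    · intro hx
      obtain ⟨t, hts, ht, hxt⟩ := exists_linearIndepOn_subset_mem_hull s hx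
      exact ⟨t, ⟨hts, ht⟩, hxt⟩
    · rintro ⟨t, ⟨hts, -⟩, hxt⟩
      exact Submodule.span_mono (coe_subset.2 hts) hxt
  rw [hhull]
  exact isClosed_biUnion_finset fun t ht ↦ isClosed_hull_of_linearIndepOn (mem_filter.1 ht).2

end Topology

end PointedCone

section Polar

variable {E : Type*} [NormedAddCommGroup E] [InnerProductSpace ℝ E] {C D : Set E}

theorem add_mem_polarCone_inter {x' y' : E} (hx' : x' ∈ polarCone C) (hy' : y' ∈ polarCone D) :
    x' + y' ∈ polarCone (C ∩ D) := fun x hx ↦ by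
  rw [inner_add_right]
  linarith [hx' x hx.1, hy' x hx.2]

theorem polarCone_add (h0C : (0 : E) ∈ C) (h0D : (0 : E) ∈ D) :
    polarCone (C + D) = polarCone C ∩ polarCone D := by
  ext z
  refine ⟨fun hz ↦ ⟨fun x hx ↦ ?_, fun y hy ↦ ?_⟩, ?_⟩
  · simpa using hz (x + 0) (Set.add_mem_add hx h0D)
  · simpa using hz (0 + y) (Set.add_mem_add h0C hy)
  · rintro ⟨hzC, hzD⟩ _ ⟨x, hx, y, hy, rfl⟩
    rw [inner_add_left]
    linarith [hzC x hx, hzD y hy]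

theorem polarCone_setOf_forall_inner_nonpos [CompleteSpace E] (s : Finset E) :
    polarCone {x | ∀ a ∈ s, ⟪a, x⟫ ≤ 0} = (PointedCone.hull ℝ (s : Set E) : Set E) := by
  ext z
  refine ⟨fun hz ↦ ?_, fun hz x hx ↦ ?_⟩
  · by_contra hzs
    let K : ProperCone ℝ E := ⟨PointedCone.hull ℝ (s : Set E), PointedCone.isClosed_hull_finset s⟩
    obtain ⟨y, hy, hzy⟩ := K.hyperplane_separation' hzs
    have hy' : -y ∈ {x | ∀ a ∈ s, ⟪a, x⟫ ≤ 0} := fun a ha ↦ by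
      rw [inner_neg_right, neg_nonpos]
      exact hy a (PointedCone.subset_hull ha)
    have hyz := hz _ hy'
    rw [inner_neg_left, real_inner_comm, neg_nonpos] at hyz
    linarith
  · obtain ⟨c, hc, rfl⟩ := PointedCone.mem_hull_finset_iff.1 hz
    rw [inner_sum]
    refine Finset.sum_nonpos fun a ha ↦ ?_
    rw [real_inner_smul_right, real_inner_comm]
    exact mul_nonpos_of_nonneg_of_nonpos (hc a ha) (hx a ha)

theorem IsPolyhedralCone.exists_finset (hC : IsPolyhedralCone C) :
    ∃ s : Finset E, C = {x | ∀ a ∈ s, ⟪a, x⟫ ≤ 0} := by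
  classical
  obtain ⟨k, A, rfl⟩ := hC
  exact ⟨Finset.univ.image A, by simp⟩

theorem IsPolyhedralCone.zero_mem (hC : IsPolyhedralCone C) : (0 : E) ∈ C := by
  obtain ⟨k, A, rfl⟩ := hC
  simp

theorem IsPolyhedralCone.polarCone_inter [CompleteSpace E] (hC : IsPolyhedralCone C)
    (hD : IsPolyhedralCone D) : polarCone (C ∩ D) = polarCone C + polarCone D := by
  classical
  obtain ⟨s, rfl⟩ := hC.exists_finset
  obtain ⟨t, rfl⟩ := hD.exists_finset
  have hst : {x | ∀ a ∈ s, ⟪a, x⟫ ≤ 0} ∩ {x | ∀ a ∈ t, ⟪a, x⟫ ≤ 0} =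
      {x : E | ∀ a ∈ s ∪ t, ⟪a, x⟫ ≤ 0} := by
    ext x
    simp [or_imp, forall_and]
  rw [hst, polarCone_setOf_forall_inner_nonpos, polarCone_setOf_forall_inner_nonpos,
    polarCone_setOf_forall_inner_nonpos, Finset.coe_union, ← Submodule.coe_sup,
    ← Submodule.span_union]

theorem bconj_biconicLift_eq (hCD : polarCone (C ∩ D) ⊆ polarCone C + polarCone D) :
    bconj (biconicLift C) (biconicLift D) = biconicLift (C ∩ D) := by
  ext ⟨x, z⟩
  constructor
  · rintro ⟨x', y', ⟨hxC, hx', hxx'⟩, ⟨hxD, hy', hxy'⟩, rfl⟩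
    exact ⟨⟨hxC, hxD⟩, add_mem_polarCone_inter hx' hy', by
      simp only [inner_add_right, hxx', hxy', add_zero]⟩
  · rintro ⟨hx, hz, hxz⟩
    obtain ⟨x', hx', y', hy', rfl⟩ := hCD hz
    have h₁ := hx' x hx.1
    have h₂ := hy' x hx.2
    rw [inner_add_right] at hxz
    exact ⟨x', y', ⟨hx.1, hx', by linarith⟩, ⟨hx.2, hy', by linarith⟩, rfl⟩

theorem bdisj_biconicLift_eq (h0C : (0 : E) ∈ C) (h0D : (0 : E) ∈ D) :
    bdisj (biconicLift C) (biconicLift D) = biconicLift (C + D) := by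
  ext ⟨x, z⟩
  simp only [bdisj, biconicLift, Set.mem_ofPred_eq, polarCone_add h0C h0D]
  constructor
  · rintro ⟨x, y, ⟨hx, hzC, hxz⟩, ⟨hy, hzD, hyz⟩, rfl⟩
    exact ⟨Set.add_mem_add hx hy, ⟨hzC, hzD⟩, by simp only [inner_add_left, hxz, hyz, add_zero]⟩
  · rintro ⟨⟨x, hx, y, hy, rfl⟩, ⟨hzC, hzD⟩, hxyz⟩
    have h₁ := hzC x hx
    have h₂ := hzD y hy
    rw [inner_add_left] at hxyz
    exact ⟨x, y, ⟨hx, hzC, by linarith⟩, ⟨hy, hzD, by linarith⟩, rfl⟩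

end Polar

/-- For polyhedral cones `C, D ⊆ ℝ^d`: `BL(C) ∧ BL(D) = BL(C ∩ D)` and
`BL(C) ∨ BL(D) = BL(C + D)`. -/
theorem bconj_bdisj_biconicLift (d : ℕ) (C D : Set (EuclideanSpace ℝ (Fin d)))
    (hC : IsPolyhedralCone C) (hD : IsPolyhedralCone D) :
    bconj (biconicLift C) (biconicLift D) = biconicLift (C ∩ D) ∧
      bdisj (biconicLift C) (biconicLift D) = biconicLift (C + D) :=
  ⟨bconj_biconicLift_eq (hC.polarCone_inter hD).subset,
    bdisj_biconicLift_eq hC.zero_mem hD.zero_mem⟩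
end

section
/- The biconic σ-algebra on ℝ^d × ℝ^d, consisting of Borel sets M with (λ,λ')M = M for all λ, λ' > 0 (where (λ,λ')M := {(λx, λ'x') | (x,x') ∈ M}), equals the product σ-algebra of the conic σ-algebra on ℝ^d with itself. -/
open MeasureTheory Pointwise

/-- The conic Borel sets of `ℝ^d`: Borel sets invariant under positive scaling. -/
def conicSets (d : ℕ) : Set (Set (EuclideanSpace ℝ (Fin d))) :=
  {M | MeasurableSet M ∧ ∀ l : ℝ, 0 < l → l • M = M}

/-- The conic σ-algebra on `ℝ^d`. -/
def conicMS (d : ℕ) : MeasurableSpace (EuclideanSpace ℝ (Fin d)) :=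
  .generateFrom (conicSets d)

/-- The biconic Borel sets of `ℝ^d × ℝ^d`: Borel sets invariant under independent
positive scaling of both components. -/
def biconicSets (d : ℕ) :
    Set (Set (EuclideanSpace ℝ (Fin d) × EuclideanSpace ℝ (Fin d))) :=
  {M | MeasurableSet M ∧ ∀ l l' : ℝ, 0 < l → 0 < l' →
    (fun p : EuclideanSpace ℝ (Fin d) × EuclideanSpace ℝ (Fin d) =>
      (l • p.1, l' • p.2)) '' M = M}

namespace BiconicAux

variable {d : ℕ}

open scoped Classical

noncomputable def r (x : EuclideanSpace ℝ (Fin d)) : EuclideanSpace ℝ (Fin d) := ‖x‖⁻¹ • x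

lemma r_smul {l : ℝ} (hl : 0 < l) (x : EuclideanSpace ℝ (Fin d)) : r (l • x) = r x := by
  unfold r
  rw [norm_smul, smul_smul]
  congr 1
  rw [Real.norm_eq_abs, abs_of_pos hl, mul_inv, mul_comm l⁻¹, mul_assoc,
    inv_mul_cancel₀ hl.ne', mul_one]

lemma r_measurable : Measurable (r (d := d)) :=
  (measurable_norm.inv).smul measurable_id

lemma r_eq_smul (x : EuclideanSpace ℝ (Fin d)) :
    r x = (if x = 0 then (1 : ℝ) else ‖x‖⁻¹) • x := by
  rcases eq_or_ne x 0 with h | h <;> simp [r, h]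

lemma r_coef_pos (x : EuclideanSpace ℝ (Fin d)) :
    0 < (if x = 0 then (1 : ℝ) else ‖x‖⁻¹) := by
  rcases eq_or_ne x 0 with h | h <;> simp [h, norm_pos_iff]

lemma smul_set_eq_preimage {l : ℝ} (hl : l ≠ 0) (s : Set (EuclideanSpace ℝ (Fin d))) :
    l • s = (fun x => l⁻¹ • x) ⁻¹' s := by
  ext x
  rw [Set.mem_smul_set_iff_inv_smul_mem₀ hl]
  rfl

lemma r_preimage_invariant {l : ℝ} (hl : 0 < l) (B : Set (EuclideanSpace ℝ (Fin d))) :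
    l • (r ⁻¹' B) = r ⁻¹' B := by
  rw [smul_set_eq_preimage hl.ne']
  ext x
  simp only [Set.mem_preimage]
  rw [r_smul (inv_pos.2 hl)]

/-- conicMS-measurable sets are conic Borel sets. -/
lemma conic_of_measurable {t : Set (EuclideanSpace ℝ (Fin d))}
    (ht : MeasurableSet[conicMS d] t) : t ∈ conicSets d := by
  have hle : conicMS d ≤
      { MeasurableSet' := fun s => s ∈ conicSets d
        measurableSet_empty := ⟨MeasurableSet.empty, fun l hl => by simp⟩
        measurableSet_compl := by
          rintro s ⟨hs, hinv⟩
          refine ⟨hs.compl, fun l hl => ?_⟩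
          rw [smul_set_eq_preimage hl.ne', Set.preimage_compl, ← smul_set_eq_preimage hl.ne',
            hinv l hl]
        measurableSet_iUnion := by
          intro f hf
          refine ⟨MeasurableSet.iUnion fun i => (hf i).1, fun l hl => ?_⟩
          rw [smul_set_eq_preimage hl.ne', Set.preimage_iUnion]
          simp only [← smul_set_eq_preimage hl.ne']
          exact Set.iUnion_congr fun i => (hf i).2 l hl } :=
    MeasurableSpace.generateFrom_le fun s hs => hs
  exact hle t ht

/-- The image under independent scaling equals a preimage. -/
lemma image_scale_eq_preimage {l l' : ℝ} (hl : 0 < l) (hl' : 0 < l')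
    (M : Set (EuclideanSpace ℝ (Fin d) × EuclideanSpace ℝ (Fin d))) :
    (fun p : EuclideanSpace ℝ (Fin d) × EuclideanSpace ℝ (Fin d) =>
      (l • p.1, l' • p.2)) '' M
      = (fun p : EuclideanSpace ℝ (Fin d) × EuclideanSpace ℝ (Fin d) =>
          (l⁻¹ • p.1, l'⁻¹ • p.2)) ⁻¹' M := by
  ext ⟨x, y⟩
  constructor
  · rintro ⟨⟨a, b⟩, hab, h⟩
    obtain ⟨h1, h2⟩ := Prod.mk.injEq .. ▸ h
    simp only [Set.mem_preimage, ← h1, ← h2]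
    rwa [inv_smul_smul₀ hl.ne', inv_smul_smul₀ hl'.ne']
  · intro h
    exact ⟨(l⁻¹ • x, l'⁻¹ • y), h, by
      simp [smul_smul, mul_inv_cancel₀ hl.ne', mul_inv_cancel₀ hl'.ne']⟩

lemma mem_of_scale {M : Set (EuclideanSpace ℝ (Fin d) × EuclideanSpace ℝ (Fin d))}
    (hinv : ∀ l l' : ℝ, 0 < l → 0 < l' →
      (fun p : EuclideanSpace ℝ (Fin d) × EuclideanSpace ℝ (Fin d) =>
        (l • p.1, l' • p.2)) '' M = M)
    {l l' : ℝ} (hl : 0 < l) (hl' : 0 < l')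
    (x y : EuclideanSpace ℝ (Fin d)) :
    (x, y) ∈ M ↔ (l • x, l' • y) ∈ M := by
  constructor
  · intro h
    rw [← hinv l l' hl hl']
    exact ⟨(x, y), h, rfl⟩
  · intro h
    rw [← hinv l⁻¹ l'⁻¹ (inv_pos.2 hl) (inv_pos.2 hl')]
    exact ⟨(l • x, l' • y), h, by simp [inv_smul_smul₀ hl.ne', inv_smul_smul₀ hl'.ne']⟩

end BiconicAux

open BiconicAux in
/-- The biconic σ-algebra equals the product of the conic σ-algebra with itself. -/
theorem biconicSets_eq_prod (d : ℕ) :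
    biconicSets d =
      {M | @MeasurableSet _ (@Prod.instMeasurableSpace _ _ (conicMS d) (conicMS d)) M} := by
  ext M
  constructor
  · rintro ⟨hM, hinv⟩
    -- M = (r × r)⁻¹ M
    have hr : @Measurable _ _ (conicMS d) _ (r (d := d)) := by
      intro s hs
      exact MeasurableSpace.measurableSet_generateFrom
        ⟨r_measurable hs, fun l hl => r_preimage_invariant hl s⟩
    have hmap : @Measurable _ _ (@Prod.instMeasurableSpace _ _ (conicMS d) (conicMS d)) _
        (fun p : EuclideanSpace ℝ (Fin d) × EuclideanSpace ℝ (Fin d) => (r p.1, r p.2)) :=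
      Measurable.prodMk
        (hr.comp (@measurable_fst _ _ (conicMS d) (conicMS d)))
        (hr.comp (@measurable_snd _ _ (conicMS d) (conicMS d)))
    have hMeq : M = (fun p : EuclideanSpace ℝ (Fin d) × EuclideanSpace ℝ (Fin d) =>
        (r p.1, r p.2)) ⁻¹' M := by
      ext ⟨x, y⟩
      simp only [Set.mem_preimage]
      rw [r_eq_smul x, r_eq_smul y]
      exact mem_of_scale hinv (r_coef_pos x) (r_coef_pos y) x y
    rw [Set.mem_setOf_eq, hMeq]
    exact hmap hM
  · intro hM
    -- biconicSets is a σ-algebra containing the generators of the product σ-algebra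
    have hle : (@Prod.instMeasurableSpace _ _ (conicMS d) (conicMS d)) ≤
        { MeasurableSet' := fun s => s ∈ biconicSets d
          measurableSet_empty := ⟨MeasurableSet.empty, fun l l' hl hl' => by simp⟩
          measurableSet_compl := by
            rintro s ⟨hs, hinv⟩
            refine ⟨hs.compl, fun l l' hl hl' => ?_⟩
            rw [image_scale_eq_preimage hl hl', Set.preimage_compl,
              ← image_scale_eq_preimage hl hl', hinv l l' hl hl']
          measurableSet_iUnion := by
            intro f hf
            refine ⟨MeasurableSet.iUnion fun i => (hf i).1, fun l l' hl hl' => ?_⟩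
            rw [image_scale_eq_preimage hl hl', Set.preimage_iUnion]
            simp only [← image_scale_eq_preimage hl hl']
            exact Set.iUnion_congr fun i => (hf i).2 l l' hl hl' } := by
      refine sup_le ?_ ?_
      · rw [MeasurableSpace.comap_le_iff_le_map]
        intro t ht
        obtain ⟨htB, htinv⟩ := conic_of_measurable (d := d) ht
        refine ⟨htB.preimage measurable_fst, fun l l' hl hl' => ?_⟩
        rw [image_scale_eq_preimage hl hl']
        ext ⟨x, y⟩
        simp only [Set.mem_preimage]
        conv_rhs => rw [← htinv l hl, smul_set_eq_preimage hl.ne']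
        rfl
      · rw [MeasurableSpace.comap_le_iff_le_map]
        intro t ht
        obtain ⟨htB, htinv⟩ := conic_of_measurable (d := d) ht
        refine ⟨htB.preimage measurable_snd, fun l l' hl hl' => ?_⟩
        rw [image_scale_eq_preimage hl hl']
        ext ⟨x, y⟩
        simp only [Set.mem_preimage]
        conv_rhs => rw [← htinv l' hl', smul_set_eq_preimage hl'.ne']
        rfl
    exact hle M hM
end
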